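/- Let (V,𝒳) be a corepresentation of a partial Hopf algebra 𝒜 with antipode S, and set Z(k,l;m,n) := (S ⊗ id)(X(n,m;l,k)). Then Z(k,l;m,n) ∈ A(k,l;m,n) ⊗ Hom(V(l,k),V(n,m)), and the following hold: X(k,l;m,n)·Z(l,k';n,m') = 0 whenever m' ≠ m; Σ_n X(k,l;m,n)·Z(l,k';n,m) = δ_{k,k'} 1(k,m) ⊗ id_{V(k,l)}; Z(n,m;l,k)·X(m,n';k,l') = 0 whenever n ≠ n'; and Σ_m Z(n,m;l,k)·X(m,n;k,l') = δ_{l,l'} 1(n,l) ⊗ id_{V(k,l)}. In particular, the total multiplier Z := (S ⊗ id)(X) satisfies XZ = Σ_k λ_k ⊗ λ^V_k and ZX = Σ_l ρ_l ⊗ ρ^V_l, where λ^V_k, ρ^V_l are the projections of V onto ⊕_q V(k,q) and ⊕_p V(p,l), and Z is a generalized inverse of X: XZX = X and ZXZ = Z. -/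

import Mathlib

open scoped TensorProduct Classical ComplexOrder
open TensorProduct

noncomputable section

/-- The homogeneous component `A(k,l;m,n)` of a partial algebra, determined by
the family of local units `E`: it consists of those `a` with `E k m * a = a = a * E l n`. -/
def gradeComp {I C : Type} [NonUnitalRing C] [Module ℂ C]
    [SMulCommClass ℂ C C] [IsScalarTower ℂ C C]
    (E : I → I → C) (k l m n : I) : Submodule ℂ C where
  carrier := {a | E k m * a = a ∧ a * E l n = a}
  add_mem' := fun ha hb => ⟨by rw [mul_add, ha.1, hb.1], by rw [add_mul, ha.2, hb.2]⟩
  zero_mem' := ⟨mul_zero _, zero_mul _⟩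
  smul_mem' := fun c a ha => ⟨by rw [mul_smul_comm, ha.1], by rw [smul_mul_assoc, ha.2]⟩

/-- An `I`-partial bialgebra, presented through its total algebra `C`:
a collection of subspaces `A(k,l;m,n)` (cut out by the local units `E k m = 1(k,m)`)
which decompose `C`, together with comultiplication maps `Δ r s`, and a counit `ε`,
subject to the axioms of a partial bialgebra. -/
structure PartialBialgebra (I C : Type) [NonUnitalRing C] [Module ℂ C]
    [SMulCommClass ℂ C C] [IsScalarTower ℂ C C] : Type 1 where
  /-- the local units `1(k,m)` -/
  E : I → I → C
  E_idem : ∀ k m, E k m * E k m = E k m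
  E_orth : ∀ k l m n, (k, m) ≠ (l, n) → E k m * E l n = 0
  /-- the total algebra is the direct sum of its homogeneous components -/
  grading : DirectSum.IsInternal fun x : I × I × I × I =>
    gradeComp E x.1 x.2.1 x.2.2.1 x.2.2.2
  /-- the comultiplication maps `Δ_{rs}` -/
  Δ : I → I → C →ₗ[ℂ] C ⊗[ℂ] C
  /-- the counit -/
  ε : C →ₗ[ℂ] ℂ
  Δ_mem : ∀ k l m n r s, ∀ a ∈ gradeComp E k l m n,
    Δ r s a ∈ LinearMap.range (TensorProduct.map (gradeComp E k l r s).subtype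
      (gradeComp E r s m n).subtype)
  coassoc : ∀ r s t u (a : C),
    (TensorProduct.assoc ℂ C C C) ((LinearMap.rTensor C (Δ r s)) (Δ t u a))
      = (LinearMap.lTensor C (Δ t u)) (Δ r s a)
  counit_l : ∀ k l m n, ∀ a ∈ gradeComp E k l m n,
    (TensorProduct.lid ℂ C) ((LinearMap.rTensor C ε) (Δ k l a)) = a
  counit_r : ∀ k l m n, ∀ a ∈ gradeComp E k l m n,
    (TensorProduct.rid ℂ C) ((LinearMap.lTensor C ε) (Δ m n a)) = a
  ε_supp : ∀ k l m n, (k, l) ≠ (m, n) → ∀ a ∈ gradeComp E k l m n, ε a = 0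
  ε_mul : ∀ k l p m n q, ∀ a ∈ gradeComp E k l m n, ∀ b ∈ gradeComp E l p n q,
    ε (a * b) = ε a * ε b
  ε_E : ∀ k, ε (E k k) = 1
  Δ_E_diag : ∀ k m l, Δ l l (E k m) = E k l ⊗ₜ[ℂ] E l m
  Δ_E_ne : ∀ k m l l', l ≠ l' → Δ l l' (E k m) = 0
  Δ_rcf_row : ∀ (a : C) (r : I), {s | Δ r s a ≠ 0}.Finite
  Δ_rcf_col : ∀ (a : C) (s : I), {r | Δ r s a ≠ 0}.Finite
  Δ_mul : ∀ r s (a b : C), Δ r s (a * b) = ∑ᶠ t, Δ r t a * Δ t s b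

namespace PartialBialgebra

variable {I C : Type} [NonUnitalRing C] [Module ℂ C]
  [SMulCommClass ℂ C C] [IsScalarTower ℂ C C] (B : PartialBialgebra I C)

/-- the homogeneous component `A(k,l;m,n)` of the partial bialgebra -/
def comp (k l m n : I) : Submodule ℂ C := gradeComp B.E k l m n

/-- `λ_p a`, the product of the multiplier `λ_p = Σ_l 1(p,l)` with `a` -/
def lamMul (p : I) (a : C) : C := ∑ᶠ l, B.E p l * a

/-- `a λ_p` -/
def mulLam (a : C) (p : I) : C := ∑ᶠ l, a * B.E p l

/-- `ρ_p a` -/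
def rhoMul (p : I) (a : C) : C := ∑ᶠ k, B.E k p * a

/-- `a ρ_p` -/
def mulRho (a : C) (p : I) : C := ∑ᶠ k, a * B.E k p

/-- `S` is an antipode for the partial bialgebra `B`: it maps each component
`A(k,l;m,n)` to `A(n,m;l,k)` and satisfies `a₍₁₎S(a₍₂₎) = Π^L(a)` and
`S(a₍₁₎)a₍₂₎ = Π^R(a)`, written out in components (cutting the multiplier
`Π^L(a) = Σ_p ε(λ_p a) λ_p` at the column `(r,r)`, resp. `Π^R(a) = Σ_p ε(a ρ_p) ρ_p`
at the row `(s,s)`). -/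
def IsAntipode (S : C →ₗ[ℂ] C) : Prop :=
  (∀ k l m n, ∀ a ∈ B.comp k l m n, S a ∈ B.comp n m l k) ∧
  (∀ (a : C) (r : I),
    ∑ᶠ s, (LinearMap.mul' ℂ C) ((LinearMap.lTensor C S) (B.Δ r s a))
      = ∑ᶠ p, B.ε (B.lamMul p a) • B.E p r) ∧
  (∀ (a : C) (s : I),
    ∑ᶠ r, (LinearMap.mul' ℂ C) ((LinearMap.rTensor C S) (B.Δ r s a))
      = ∑ᶠ p, B.ε (B.mulRho a p) • B.E s p)

/-- a partial Hopf algebra is a partial bialgebra admitting an antipode -/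
def IsHopf : Prop := ∃ S : C →ₗ[ℂ] C, B.IsAntipode S

/-- a left invariant integral on a partial bialgebra -/
def IsLeftIntegral (φ : C →ₗ[ℂ] ℂ) : Prop :=
  (∀ k l m n, ¬(k = l ∧ m = n) → ∀ a ∈ B.comp k l m n, φ a = 0) ∧
  (∀ k, φ (B.E k k) = 1) ∧
  (∀ k p m l, ∀ a ∈ B.comp k p m m,
    (TensorProduct.rid ℂ C) ((LinearMap.lTensor C φ) (B.Δ l l a))
      = if k = p then φ a • B.E k l else 0)

/-- a right invariant integral on a partial bialgebra -/
def IsRightIntegral (φ : C →ₗ[ℂ] ℂ) : Prop :=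
  (∀ k l m n, ¬(k = l ∧ m = n) → ∀ a ∈ B.comp k l m n, φ a = 0) ∧
  (∀ k, φ (B.E k k) = 1) ∧
  (∀ k m p l, ∀ a ∈ B.comp k k m p,
    (TensorProduct.lid ℂ C) ((LinearMap.rTensor C φ) (B.Δ l l a))
      = if m = p then φ a • B.E l m else 0)

/-- an invariant integral is a left and right invariant integral -/
def IsIntegral (φ : C →ₗ[ℂ] ℂ) : Prop := B.IsLeftIntegral φ ∧ B.IsRightIntegral φ

end PartialBialgebra

/-- the componentwise star operation on `C ⊗[ℂ] C`, `(a ⊗ b)* = a* ⊗ b*` -/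
def starTmul {C : Type} [NonUnitalRing C] [Module ℂ C]
    [SMulCommClass ℂ C C] [IsScalarTower ℂ C C] [StarRing C] [StarModule ℂ C] :
    C ⊗[ℂ] C →+ C ⊗[ℂ] C :=
  TensorProduct.liftAddHom
    { toFun := fun a => AddMonoidHom.mk' (fun b => star a ⊗ₜ[ℂ] star b)
        (fun b b' => by simp [star_add, TensorProduct.tmul_add])
      map_zero' := by ext b; simp
      map_add' := fun a a' => by ext b; simp [star_add, TensorProduct.add_tmul] }
    (fun c a b => by
      simp only [AddMonoidHom.mk'_apply, AddMonoidHom.coe_mk, ZeroHom.coe_mk, star_smul]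
      rw [TensorProduct.smul_tmul])

namespace PartialBialgebra

variable {I C : Type} [NonUnitalRing C] [Module ℂ C]
  [SMulCommClass ℂ C C] [IsScalarTower ℂ C C] (B : PartialBialgebra I C)

/-- the conditions making a partial bialgebra a partial *-bialgebra:
the total algebra carries an (antilinear, antimultiplicative) involution
(recorded by the `StarRing` and `StarModule` instances), the local units are
self-adjoint, and `Δ_{rs}(a)* = Δ_{sr}(a*)`. -/
def IsStarBialgebra [StarRing C] [StarModule ℂ C] : Prop :=
  (∀ k m, star (B.E k m) = B.E k m) ∧
  (∀ r s (a : C), B.Δ s r (star a) = starTmul (B.Δ r s a))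

/-- the data of a partial compact quantum group: a partial Hopf `*`-algebra with a
positive invariant integral `φ`. -/
def IsCQG [StarRing C] [StarModule ℂ C] (φ : C →ₗ[ℂ] ℂ) : Prop :=
  B.IsStarBialgebra ∧ B.IsHopf ∧ B.IsIntegral φ ∧ ∀ a : C, 0 ≤ φ (star a * a)

end PartialBialgebra

/-- row-and-column finiteness of an `I²`-graded family of (finite-dimensional) spaces -/
def Rcfd {I : Type} (V : I → I → Type) [∀ k l, Zero (V k l)] : Prop :=
  (∀ k, {l | ∃ v : V k l, v ≠ 0}.Finite) ∧ (∀ l, {k | ∃ v : V k l, v ≠ 0}.Finite)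

/-- conjugation of a hom by post- and pre-composition, as a linear map -/
def conjHom {V0 V1 V2 V3 : Type}
    [AddCommGroup V0] [Module ℂ V0] [AddCommGroup V1] [Module ℂ V1]
    [AddCommGroup V2] [Module ℂ V2] [AddCommGroup V3] [Module ℂ V3]
    (f : V2 →ₗ[ℂ] V3) (g : V0 →ₗ[ℂ] V1) : (V1 →ₗ[ℂ] V2) →ₗ[ℂ] (V0 →ₗ[ℂ] V3) where
  toFun h := f ∘ₗ h ∘ₗ g
  map_add' h h' := by ext v; simp
  map_smul' c h := by ext v; simp

/-- the product `x₁₃ y₂₃` of two `C ⊗ Hom` legs, keeping the two algebra legs apart -/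
def corepProd {C : Type} [AddCommGroup C] [Module ℂ C] {V1 V2 V3 : Type}
    [AddCommGroup V1] [Module ℂ V1] [AddCommGroup V2] [Module ℂ V2]
    [AddCommGroup V3] [Module ℂ V3]
    (x : C ⊗[ℂ] (V2 →ₗ[ℂ] V3)) (y : C ⊗[ℂ] (V1 →ₗ[ℂ] V2)) :
    (C ⊗[ℂ] C) ⊗[ℂ] (V1 →ₗ[ℂ] V3) :=
  (TensorProduct.map LinearMap.id (TensorProduct.lift (LinearMap.llcomp ℂ V1 V2 V3)))
    ((TensorProduct.tensorTensorTensorComm ℂ C (V2 →ₗ[ℂ] V3) C (V1 →ₗ[ℂ] V2)) (x ⊗ₜ[ℂ] y))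

/-- the product of two elements of `C ⊗ Hom`, multiplying the algebra legs
and composing the hom legs -/
def homProd {C : Type} [NonUnitalRing C] [Module ℂ C]
    [SMulCommClass ℂ C C] [IsScalarTower ℂ C C] {V1 V2 V3 : Type}
    [AddCommGroup V1] [Module ℂ V1] [AddCommGroup V2] [Module ℂ V2]
    [AddCommGroup V3] [Module ℂ V3]
    (x : C ⊗[ℂ] (V2 →ₗ[ℂ] V3)) (y : C ⊗[ℂ] (V1 →ₗ[ℂ] V2)) :
    C ⊗[ℂ] (V1 →ₗ[ℂ] V3) :=
  (TensorProduct.map (LinearMap.mul' ℂ C) (TensorProduct.lift (LinearMap.llcomp ℂ V1 V2 V3)))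
    ((TensorProduct.tensorTensorTensorComm ℂ C (V2 →ₗ[ℂ] V3) C (V1 →ₗ[ℂ] V2)) (x ⊗ₜ[ℂ] y))

/-- the functional `ω_{f,v}` on a hom space, `T ↦ f (T v)` -/
def omega {V1 V2 : Type} [AddCommGroup V1] [Module ℂ V1] [AddCommGroup V2] [Module ℂ V2]
    (f : V2 →ₗ[ℂ] ℂ) (v : V1) : (V1 →ₗ[ℂ] V2) →ₗ[ℂ] ℂ where
  toFun T := f (T v)
  map_add' := by intros; simp
  map_smul' := by intros; simp

/-- slicing a functional on the hom leg of an element of `C ⊗ Hom`: `(id ⊗ ω)(x)` -/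
def matCoeff {C : Type} [AddCommGroup C] [Module ℂ C] {V1 V2 : Type}
    [AddCommGroup V1] [Module ℂ V1] [AddCommGroup V2] [Module ℂ V2]
    (ω : (V1 →ₗ[ℂ] V2) →ₗ[ℂ] ℂ) (x : C ⊗[ℂ] (V1 →ₗ[ℂ] V2)) : C :=
  (TensorProduct.rid ℂ C) ((LinearMap.lTensor C ω) x)

namespace PartialBialgebra

variable {I C : Type} [NonUnitalRing C] [Module ℂ C]
  [SMulCommClass ℂ C C] [IsScalarTower ℂ C C] (B : PartialBialgebra I C)

/-- A corepresentation of a partial bialgebra on an `I²`-graded family of vector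
spaces: a family of elements `X(k,l;m,n) ∈ A(k,l;m,n) ⊗ Hom(V(m,n),V(k,l))` such
that `(Δ_{pq} ⊗ id)(X(k,l;m,n)) = X(k,l;p,q)₁₃ X(p,q;m,n)₂₃` and
`(ε ⊗ id)(X(k,l;m,n)) = δ_{k,m} δ_{l,n} id`. -/
structure Corep (V : I → I → Type) [∀ k l, AddCommGroup (V k l)]
    [∀ k l, Module ℂ (V k l)] : Type 1 where
  X : ∀ k l m n : I, C ⊗[ℂ] (V m n →ₗ[ℂ] V k l)
  X_mem : ∀ k l m n, X k l m n ∈ LinearMap.range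
    (LinearMap.rTensor (V m n →ₗ[ℂ] V k l) (B.comp k l m n).subtype)
  comul : ∀ k l m n p q,
    LinearMap.rTensor (V m n →ₗ[ℂ] V k l) (B.Δ p q) (X k l m n)
      = corepProd (X k l p q) (X p q m n)
  counit_diag : ∀ k l,
    (TensorProduct.lid ℂ (V k l →ₗ[ℂ] V k l))
      ((LinearMap.rTensor (V k l →ₗ[ℂ] V k l) B.ε) (X k l k l)) = LinearMap.id
  counit_ne : ∀ k l m n, (k, l) ≠ (m, n) →
    (TensorProduct.lid ℂ (V m n →ₗ[ℂ] V k l))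
      ((LinearMap.rTensor (V m n →ₗ[ℂ] V k l) B.ε) (X k l m n)) = 0

variable {B}

/-- a morphism of corepresentations: `(1 ⊗ T(k,l)) X(k,l;m,n) = Y(k,l;m,n) (1 ⊗ T(m,n))` -/
def IsCorepMorphism {V W : I → I → Type}
    [∀ k l, AddCommGroup (V k l)] [∀ k l, Module ℂ (V k l)]
    [∀ k l, AddCommGroup (W k l)] [∀ k l, Module ℂ (W k l)]
    (𝒳 : Corep B V) (𝒴 : Corep B W) (T : ∀ k l, V k l →ₗ[ℂ] W k l) : Prop :=
  ∀ k l m n,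
    (LinearMap.lTensor C (conjHom (T k l) (LinearMap.id : V m n →ₗ[ℂ] V m n))) (𝒳.X k l m n)
      = (LinearMap.lTensor C (conjHom (LinearMap.id : W k l →ₗ[ℂ] W k l) (T m n)))
          (𝒴.X k l m n)

/-- an isomorphism of corepresentations -/
def IsCorepIso {V W : I → I → Type}
    [∀ k l, AddCommGroup (V k l)] [∀ k l, Module ℂ (V k l)]
    [∀ k l, AddCommGroup (W k l)] [∀ k l, Module ℂ (W k l)]
    (𝒳 : Corep B V) (𝒴 : Corep B W) (T : ∀ k l, V k l →ₗ[ℂ] W k l) : Prop :=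
  IsCorepMorphism 𝒳 𝒴 T ∧ ∀ k l, Function.Bijective (T k l)

/-- invariance of a family of subspaces under a corepresentation:
`(1 ⊗ π(k,l)) X(k,l;m,n) (1 ⊗ ι(m,n)) = 0` -/
def IsInvariant {V : I → I → Type}
    [∀ k l, AddCommGroup (V k l)] [∀ k l, Module ℂ (V k l)]
    (𝒳 : Corep B V) (W : ∀ k l, Submodule ℂ (V k l)) : Prop :=
  ∀ k l m n,
    (LinearMap.lTensor C (conjHom (W k l).mkQ (W m n).subtype)) (𝒳.X k l m n) = 0

/-- irreducibility of a (nonzero) corepresentation -/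
def Corep.Irreducible {V : I → I → Type}
    [∀ k l, AddCommGroup (V k l)] [∀ k l, Module ℂ (V k l)]
    (𝒳 : Corep B V) : Prop :=
  (∃ k l, ∃ v : V k l, v ≠ 0) ∧
  ∀ W : ∀ k l, Submodule ℂ (V k l), IsInvariant 𝒳 W →
    (∀ k l, W k l = ⊥) ∨ (∀ k l, W k l = ⊤)

/-- the blocks `(X⁻¹)(k,l;m,n) := (S ⊗ id)(X(n,m;l,k))` of the generalized inverse -/
def Corep.inv {V : I → I → Type}
    [∀ k l, AddCommGroup (V k l)] [∀ k l, Module ℂ (V k l)]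
    (𝒳 : Corep B V) (S : C →ₗ[ℂ] C) (k l m n : I) : C ⊗[ℂ] (V l k →ₗ[ℂ] V n m) :=
  LinearMap.rTensor (V l k →ₗ[ℂ] V n m) S (𝒳.X n m l k)

/-- the space of matrix coefficients of a corepresentation -/
def Corep.coeffs {V : I → I → Type}
    [∀ k l, AddCommGroup (V k l)] [∀ k l, Module ℂ (V k l)]
    (𝒳 : Corep B V) : Submodule ℂ C :=
  Submodule.span ℂ {a | ∃ k l m n, ∃ f : V k l →ₗ[ℂ] ℂ, ∃ v : V m n,
    a = matCoeff (omega f v) (𝒳.X k l m n)}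

end PartialBialgebra

/-- `(a ⊗ T)* := a* ⊗ T†`, the star of an element of `C ⊗ B(H₁,H₂)` -/
def starAdj {C : Type} [NonUnitalRing C] [Module ℂ C] [StarRing C] [StarModule ℂ C]
    {H1 H2 : Type} [NormedAddCommGroup H1] [InnerProductSpace ℂ H1] [FiniteDimensional ℂ H1]
    [NormedAddCommGroup H2] [InnerProductSpace ℂ H2] [FiniteDimensional ℂ H2] :
    C ⊗[ℂ] (H1 →ₗ[ℂ] H2) →+ C ⊗[ℂ] (H2 →ₗ[ℂ] H1) :=
  TensorProduct.liftAddHom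
    { toFun := fun a => AddMonoidHom.mk' (fun T => star a ⊗ₜ[ℂ] LinearMap.adjoint T)
        (fun T T' => by simp [map_add, TensorProduct.tmul_add])
      map_zero' := by ext T; simp
      map_add' := fun a a' => by ext T; simp [star_add, TensorProduct.add_tmul] }
    (fun c a T => by
      simp only [AddMonoidHom.mk'_apply, AddMonoidHom.coe_mk, ZeroHom.coe_mk]
      rw [star_smul, TensorProduct.smul_tmul, map_smulₛₗ, starRingEnd_apply])

namespace PartialBialgebra

variable {I C : Type} [NonUnitalRing C] [Module ℂ C]
  [SMulCommClass ℂ C C] [IsScalarTower ℂ C C] {B : PartialBialgebra I C}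

/-- unitarity of a corepresentation on a family of Hilbert spaces:
`(X⁻¹)(k,l;m,n) = (X(l,k;n,m))*` -/
def Corep.IsUnitary [StarRing C] [StarModule ℂ C] {H : I → I → Type}
    [∀ k l, NormedAddCommGroup (H k l)] [∀ k l, InnerProductSpace ℂ (H k l)]
    [∀ k l, FiniteDimensional ℂ (H k l)]
    (𝒳 : Corep B H) (S : C →ₗ[ℂ] C) : Prop :=
  ∀ k l m n, 𝒳.inv S k l m n = starAdj (𝒳.X l k n m)

end PartialBialgebra

section TotalEmbedding

variable {I : Type} (V : I → I → Type)
  [∀ k l, AddCommGroup (V k l)] [∀ k l, Module ℂ (V k l)]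

/-- the total space `⊕_{k,l} V(k,l)` of an `I²`-graded family -/
abbrev TotalSpace : Type := Π₀ p : I × I, V p.1 p.2

/-- embedding of a hom between homogeneous components into the endomorphisms of the
total space `⊕ V(k,l)`, via the inclusion of `V(k,l)` and the projection onto `V(m,n)` -/
def inclHom (k l m n : I) :
    (V m n →ₗ[ℂ] V k l) →ₗ[ℂ] (TotalSpace V →ₗ[ℂ] TotalSpace V) where
  toFun f := (DFinsupp.lsingle (R := ℂ) (k, l)) ∘ₗ f ∘ₗ (DFinsupp.lapply (R := ℂ) (m, n))
  map_add' f g := by ext x; simp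
  map_smul' c f := by ext x; simp

end TotalEmbedding

namespace PartialBialgebra

variable {I C : Type} [NonUnitalRing C] [Module ℂ C]
  [SMulCommClass ℂ C C] [IsScalarTower ℂ C C] {B : PartialBialgebra I C}
  {V : I → I → Type} [∀ k l, AddCommGroup (V k l)] [∀ k l, Module ℂ (V k l)]

/-- the block `X(k,l;m,n)` of a corepresentation, viewed inside
`A ⊗ End(⊕ V(k,l))` -/
def Corep.XT (𝒳 : Corep B V) (k l m n : I) :
    C ⊗[ℂ] (TotalSpace V →ₗ[ℂ] TotalSpace V) :=
  (LinearMap.lTensor C (inclHom V k l m n)) (𝒳.X k l m n)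

/-- the block `Z(k,l;m,n) = (S ⊗ id)(X(n,m;l,k))` of the generalized inverse, viewed
inside `A ⊗ End(⊕ V(k,l))` -/
def Corep.ZT (𝒳 : Corep B V) (S : C →ₗ[ℂ] C) (k l m n : I) :
    C ⊗[ℂ] (TotalSpace V →ₗ[ℂ] TotalSpace V) :=
  (LinearMap.lTensor C (inclHom V n m l k)) (𝒳.inv S k l m n)

end PartialBialgebra

/-!
Applying `μ ∘ (id ⊗ S)` to the first leg of `(Δ_{mn} ⊗ id) X(k,l;k',l) = X(k,l;m,n)₁₃ X(m,n;k',l)₂₃`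
and summing over `n` turns the left side, by the antipode axiom `a₍₁₎S(a₍₂₎) = Π^L(a)`, into
`(1(k,m) ε ⊗ id) X(k,l;k',l)`, and the right side into `Σ_n X(k,l;m,n) Z(l,k';n,m)`; the counit
condition `(ε ⊗ id) X = δ id` then gives the sum formula for `XZ`. The mirror argument with
`S(a₍₁₎)a₍₂₎ = Π^R(a)` gives the one for `ZX`, and the sums are finite because `Δ` is row and column
finite. Off the diagonal the hom legs compose through different summands of `⊕ V` and vanish.
Finally `XZX = (XZ)X` and `ZXZ = Z(XZ)` collapse because `1(k,m)` is a left unit on `A(k,l;m,n)`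
and `1(l,n)` a right unit.
-/

theorem LinearMap.map_finsum {R M N ι : Type*} [Semiring R] [AddCommMonoid M] [AddCommMonoid N]
    [Module R M] [Module R N] (g : M →ₗ[R] N) {f : ι → M} (hf : f.HasFiniteSupport) :
    g (∑ᶠ i, f i) = ∑ᶠ i, g (f i) :=
  g.toAddMonoidHom.map_finsum hf

section HomProd

open LinearMap

variable {C : Type} [NonUnitalRing C] [Module ℂ C] [SMulCommClass ℂ C C] [IsScalarTower ℂ C C]
  {V1 V2 V3 V4 : Type} [AddCommGroup V1] [Module ℂ V1] [AddCommGroup V2] [Module ℂ V2]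
  [AddCommGroup V3] [Module ℂ V3] [AddCommGroup V4] [Module ℂ V4]

def homProdBilin :
    C ⊗[ℂ] (V2 →ₗ[ℂ] V3) →ₗ[ℂ] C ⊗[ℂ] (V1 →ₗ[ℂ] V2) →ₗ[ℂ] C ⊗[ℂ] (V1 →ₗ[ℂ] V3) :=
  (TensorProduct.mk ℂ _ _).compr₂
    (TensorProduct.map (mul' ℂ C) (TensorProduct.lift (llcomp ℂ V1 V2 V3)) ∘ₗ
      (TensorProduct.tensorTensorTensorComm ℂ C (V2 →ₗ[ℂ] V3) C (V1 →ₗ[ℂ] V2)).toLinearMap)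

theorem homProd_tmul (a b : C) (f : V2 →ₗ[ℂ] V3) (g : V1 →ₗ[ℂ] V2) :
    homProd (a ⊗ₜ[ℂ] f) (b ⊗ₜ[ℂ] g) = (a * b) ⊗ₜ[ℂ] (f ∘ₗ g) :=
  rfl

theorem homProd_zero_left (y : C ⊗[ℂ] (V1 →ₗ[ℂ] V2)) :
    homProd (0 : C ⊗[ℂ] (V2 →ₗ[ℂ] V3)) y = 0 :=
  homProdBilin.map_zero₂ y

theorem homProd_zero_right (x : C ⊗[ℂ] (V2 →ₗ[ℂ] V3)) :
    homProd x (0 : C ⊗[ℂ] (V1 →ₗ[ℂ] V2)) = 0 :=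
  (homProdBilin x).map_zero

theorem homProd_add_left (x x' : C ⊗[ℂ] (V2 →ₗ[ℂ] V3)) (y : C ⊗[ℂ] (V1 →ₗ[ℂ] V2)) :
    homProd (x + x') y = homProd x y + homProd x' y :=
  homProdBilin.map_add₂ x x' y

theorem homProd_add_right (x : C ⊗[ℂ] (V2 →ₗ[ℂ] V3)) (y y' : C ⊗[ℂ] (V1 →ₗ[ℂ] V2)) :
    homProd x (y + y') = homProd x y + homProd x y' :=
  (homProdBilin x).map_add y y'

theorem homProd_finsum_left {ι : Type} {f : ι → C ⊗[ℂ] (V2 →ₗ[ℂ] V3)}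
    (hf : f.HasFiniteSupport) (y : C ⊗[ℂ] (V1 →ₗ[ℂ] V2)) :
    homProd (∑ᶠ i, f i) y = ∑ᶠ i, homProd (f i) y :=
  (homProdBilin.flip y).map_finsum hf

theorem homProd_finsum_right {ι : Type} (x : C ⊗[ℂ] (V2 →ₗ[ℂ] V3))
    {f : ι → C ⊗[ℂ] (V1 →ₗ[ℂ] V2)} (hf : f.HasFiniteSupport) :
    homProd x (∑ᶠ i, f i) = ∑ᶠ i, homProd x (f i) :=
  (homProdBilin x).map_finsum hf

theorem homProd_assoc (x : C ⊗[ℂ] (V3 →ₗ[ℂ] V4)) (y : C ⊗[ℂ] (V2 →ₗ[ℂ] V3))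
    (z : C ⊗[ℂ] (V1 →ₗ[ℂ] V2)) :
    homProd (homProd x y) z = homProd x (homProd y z) := by
  induction x using TensorProduct.induction_on with
  | zero => simp only [homProd_zero_left]
  | add x x' hx hx' => simp only [homProd_add_left, hx, hx']
  | tmul a f =>
    induction y using TensorProduct.induction_on with
    | zero => simp only [homProd_zero_left, homProd_zero_right]
    | add y y' hy hy' => simp only [homProd_add_left, homProd_add_right, hy, hy']
    | tmul b g =>
      induction z using TensorProduct.induction_on with
      | zero => simp only [homProd_zero_right]
      | add z z' hz hz' => simp only [homProd_add_right, hz, hz']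
      | tmul c h => simp only [homProd_tmul, mul_assoc, comp_assoc]

theorem homProd_lTensor_lTensor {W1 W2 W3 : Type} [AddCommGroup W1] [Module ℂ W1]
    [AddCommGroup W2] [Module ℂ W2] [AddCommGroup W3] [Module ℂ W3]
    (Φ : (V2 →ₗ[ℂ] V3) →ₗ[ℂ] (W2 →ₗ[ℂ] W3)) (Ψ : (V1 →ₗ[ℂ] V2) →ₗ[ℂ] (W1 →ₗ[ℂ] W2))
    (Θ : (V1 →ₗ[ℂ] V3) →ₗ[ℂ] (W1 →ₗ[ℂ] W3)) (hΘ : ∀ f g, Φ f ∘ₗ Ψ g = Θ (f ∘ₗ g))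
    (x : C ⊗[ℂ] (V2 →ₗ[ℂ] V3)) (y : C ⊗[ℂ] (V1 →ₗ[ℂ] V2)) :
    homProd (lTensor C Φ x) (lTensor C Ψ y) = lTensor C Θ (homProd x y) := by
  induction x using TensorProduct.induction_on with
  | zero => simp only [map_zero, homProd_zero_left]
  | add x x' hx hx' => simp only [map_add, homProd_add_left, hx, hx']
  | tmul a f =>
    induction y using TensorProduct.induction_on with
    | zero => simp only [map_zero, homProd_zero_right]
    | add y y' hy hy' => simp only [map_add, homProd_add_right, hy, hy']
    | tmul b g => simp only [lTensor_tmul, homProd_tmul, hΘ]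

theorem homProd_lTensor_lTensor_eq_zero {U U' W1 W2 W3 : Type} [AddCommGroup U] [Module ℂ U]
    [AddCommGroup U'] [Module ℂ U'] [AddCommGroup W1] [Module ℂ W1]
    [AddCommGroup W2] [Module ℂ W2] [AddCommGroup W3] [Module ℂ W3]
    (Φ : U →ₗ[ℂ] (W2 →ₗ[ℂ] W3)) (Ψ : U' →ₗ[ℂ] (W1 →ₗ[ℂ] W2)) (hΦΨ : ∀ f g, Φ f ∘ₗ Ψ g = 0)
    (x : C ⊗[ℂ] U) (y : C ⊗[ℂ] U') :
    homProd (lTensor C Φ x) (lTensor C Ψ y) = 0 := by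
  induction x using TensorProduct.induction_on with
  | zero => simp only [map_zero, homProd_zero_left]
  | add x x' hx hx' => simp only [map_add, homProd_add_left, hx, hx', add_zero]
  | tmul a f =>
    induction y using TensorProduct.induction_on with
    | zero => simp only [map_zero, homProd_zero_right]
    | add y y' hy hy' => simp only [map_add, homProd_add_right, hy, hy', add_zero]
    | tmul b g => simp only [lTensor_tmul, homProd_tmul, hΦΨ, TensorProduct.tmul_zero]

theorem homProd_tmul_id_left (c : C) (w : C ⊗[ℂ] (V1 →ₗ[ℂ] V2)) :
    homProd (c ⊗ₜ[ℂ] LinearMap.id) w = rTensor _ (mulLeft ℂ c) w := by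
  induction w using TensorProduct.induction_on with
  | zero => simp only [map_zero, homProd_zero_right]
  | add w w' hw hw' => simp only [map_add, homProd_add_right, hw, hw']
  | tmul b g => simp only [homProd_tmul, id_comp, rTensor_tmul, mulLeft_apply]

theorem homProd_tmul_id_right (c : C) (w : C ⊗[ℂ] (V1 →ₗ[ℂ] V2)) :
    homProd w (c ⊗ₜ[ℂ] LinearMap.id) = rTensor _ (mulRight ℂ c) w := by
  induction w using TensorProduct.induction_on with
  | zero => simp only [map_zero, homProd_zero_left]
  | add w w' hw hw' => simp only [map_add, homProd_add_left, hw, hw']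
  | tmul b g => simp only [homProd_tmul, comp_id, rTensor_tmul, mulRight_apply]

theorem rTensor_mul'_map_corepProd (f g : C →ₗ[ℂ] C)
    (x : C ⊗[ℂ] (V2 →ₗ[ℂ] V3)) (y : C ⊗[ℂ] (V1 →ₗ[ℂ] V2)) :
    rTensor _ (mul' ℂ C ∘ₗ TensorProduct.map f g) (corepProd x y)
      = homProd (rTensor _ f x) (rTensor _ g y) := by
  induction x using TensorProduct.induction_on with
  | zero => simp only [corepProd, TensorProduct.zero_tmul, map_zero, homProd_zero_left]
  | add x x' hx hx' =>
    simp only [corepProd, TensorProduct.add_tmul, map_add, homProd_add_left] at hx hx' ⊢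
    rw [hx, hx']
  | tmul a φ =>
    induction y using TensorProduct.induction_on with
    | zero => simp only [corepProd, TensorProduct.tmul_zero, map_zero, homProd_zero_right]
    | add y y' hy hy' =>
      simp only [corepProd, TensorProduct.tmul_add, map_add, homProd_add_right] at hy hy' ⊢
      rw [hy, hy']
    | tmul b ψ => rfl

end HomProd

section FinsumRTensor

open LinearMap Function

variable {ι N D M : Type} [AddCommGroup N] [Module ℂ N] [AddCommGroup D] [Module ℂ D]
  [AddCommGroup M] [Module ℂ M] {f : ι → N →ₗ[ℂ] D}

theorem hasFiniteSupport_rTensor (hf : ∀ x, HasFiniteSupport fun i => f i x) (u : N ⊗[ℂ] M) :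
    HasFiniteSupport fun i => rTensor M (f i) u := by
  induction u using TensorProduct.induction_on with
  | zero => simp only [map_zero]; exact hasFiniteSupport_fun_zero
  | tmul x v => exact (hf x).fun_comp (g := fun d => d ⊗ₜ[ℂ] v) (TensorProduct.zero_tmul _ _)
  | add u u' hu hu' => simp only [map_add]; exact hu.add hu'

theorem finsum_rTensor (hf : ∀ x, HasFiniteSupport fun i => f i x) {g : N →ₗ[ℂ] D}
    (hfg : ∀ x, ∑ᶠ i, f i x = g x) (u : N ⊗[ℂ] M) :
    ∑ᶠ i, rTensor M (f i) u = rTensor M g u := by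
  induction u using TensorProduct.induction_on with
  | zero => simp only [map_zero, finsum_zero]
  | tmul x v =>
    simp only [rTensor_tmul, ← hfg]
    exact (((TensorProduct.mk ℂ D M).flip v).map_finsum (hf x)).symm
  | add u u' hu hu' =>
    simp only [map_add]
    rw [finsum_add_distrib (hasFiniteSupport_rTensor hf u) (hasFiniteSupport_rTensor hf u'),
      hu, hu']

theorem rTensor_toSpanSingleton_comp (c : N) (φ : D →ₗ[ℂ] ℂ) (w : D ⊗[ℂ] M) :
    rTensor M (toSpanSingleton ℂ N c ∘ₗ φ) w
      = c ⊗ₜ[ℂ] TensorProduct.lid ℂ M (rTensor M φ w) := by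
  induction w using TensorProduct.induction_on with
  | zero => simp only [map_zero, TensorProduct.tmul_zero]
  | tmul d v =>
    rw [rTensor_tmul, rTensor_tmul, TensorProduct.lid_tmul, LinearMap.comp_apply,
      toSpanSingleton_apply, TensorProduct.smul_tmul]
  | add w w' hw hw' => simp only [map_add, hw, hw', TensorProduct.tmul_add]

end FinsumRTensor

namespace PartialBialgebra

open LinearMap

variable {I C : Type} [NonUnitalRing C] [Module ℂ C] [SMulCommClass ℂ C C] [IsScalarTower ℂ C C]
  {B : PartialBialgebra I C} {k l m n : I} {a : C}

theorem E_mul_of_mem (ha : a ∈ B.comp k l m n) (p q : I) :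
    B.E p q * a = if (p, q) = (k, m) then a else 0 := by
  split_ifs with h
  · obtain ⟨rfl, rfl⟩ := Prod.ext_iff.mp h
    exact ha.1
  · rw [← ha.1, ← mul_assoc, B.E_orth p k q m h, zero_mul]

theorem mul_E_of_mem (ha : a ∈ B.comp k l m n) (p q : I) :
    a * B.E p q = if (p, q) = (l, n) then a else 0 := by
  split_ifs with h
  · obtain ⟨rfl, rfl⟩ := Prod.ext_iff.mp h
    exact ha.2
  · rw [← ha.2, mul_assoc, B.E_orth l p n q (Ne.symm h), mul_zero]

theorem lamMul_of_mem (ha : a ∈ B.comp k l m n) (p : I) :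
    B.lamMul p a = if p = k then a else 0 := by
  rw [lamMul, finsum_eq_single _ m fun q hq => by simp [E_mul_of_mem ha, hq]]
  simp [E_mul_of_mem ha]

theorem mulRho_of_mem (ha : a ∈ B.comp k l m n) (p : I) :
    B.mulRho a p = if p = n then a else 0 := by
  rw [mulRho, finsum_eq_single _ l fun q hq => by simp [mul_E_of_mem ha, hq]]
  simp [mul_E_of_mem ha]

theorem rTensor_mulLeft_E_of_mem_range {M : Type} [AddCommGroup M] [Module ℂ M] {w : C ⊗[ℂ] M}
    (hw : w ∈ range (rTensor M (B.comp k l m n).subtype)) (p q : I) :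
    rTensor M (mulLeft ℂ (B.E p q)) w = if (p, q) = (k, m) then w else 0 := by
  obtain ⟨u, rfl⟩ := hw
  have hcomp : mulLeft ℂ (B.E p q) ∘ₗ (B.comp k l m n).subtype
      = if (p, q) = (k, m) then (B.comp k l m n).subtype else 0 := by
    ext x
    rw [comp_apply, mulLeft_apply, Submodule.subtype_apply, E_mul_of_mem x.2]
    split_ifs <;> rfl
  rw [← rTensor_comp_apply, hcomp]
  split_ifs <;> simp only [rTensor_zero, LinearMap.zero_apply]

theorem rTensor_mulRight_E_of_mem_range {M : Type} [AddCommGroup M] [Module ℂ M] {w : C ⊗[ℂ] M}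
    (hw : w ∈ range (rTensor M (B.comp k l m n).subtype)) (p q : I) :
    rTensor M (mulRight ℂ (B.E p q)) w = if (p, q) = (l, n) then w else 0 := by
  obtain ⟨u, rfl⟩ := hw
  have hcomp : mulRight ℂ (B.E p q) ∘ₗ (B.comp k l m n).subtype
      = if (p, q) = (l, n) then (B.comp k l m n).subtype else 0 := by
    ext x
    rw [comp_apply, mulRight_apply, Submodule.subtype_apply, mul_E_of_mem x.2]
    split_ifs <;> rfl
  rw [← rTensor_comp_apply, hcomp]
  split_ifs <;> simp only [rTensor_zero, LinearMap.zero_apply]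

theorem hasFiniteSupport_Δ_row {D : Type} [AddCommGroup D] [Module ℂ D] (F : C ⊗[ℂ] C →ₗ[ℂ] D)
    (a : C) (r : I) : Function.HasFiniteSupport fun s => F (B.Δ r s a) :=
  Function.HasFiniteSupport.fun_comp (f := fun s => B.Δ r s a) (B.Δ_rcf_row a r) (map_zero F)

theorem hasFiniteSupport_Δ_col {D : Type} [AddCommGroup D] [Module ℂ D] (F : C ⊗[ℂ] C →ₗ[ℂ] D)
    (a : C) (s : I) : Function.HasFiniteSupport fun r => F (B.Δ r s a) :=
  Function.HasFiniteSupport.fun_comp (f := fun r => B.Δ r s a) (B.Δ_rcf_col a s) (map_zero F)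

namespace IsAntipode

variable {S : C →ₗ[ℂ] C}

theorem finsum_mul'_lTensor_Δ (hS : B.IsAntipode S) (ha : a ∈ B.comp k l m n) (r : I) :
    ∑ᶠ s, mul' ℂ C (lTensor C S (B.Δ r s a)) = B.ε a • B.E k r := by
  rw [hS.2.1 a r, finsum_eq_single _ k fun p hp => by simp [lamMul_of_mem ha, hp]]
  simp [lamMul_of_mem ha]

theorem finsum_mul'_rTensor_Δ (hS : B.IsAntipode S) (ha : a ∈ B.comp k l m n) (s : I) :
    ∑ᶠ r, mul' ℂ C (rTensor C S (B.Δ r s a)) = B.ε a • B.E s n := by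
  rw [hS.2.2 a s, finsum_eq_single _ n fun p hp => by simp [mulRho_of_mem ha, hp]]
  simp [mulRho_of_mem ha]

end IsAntipode

end PartialBialgebra

section InclHom

variable {I : Type} {V : I → I → Type} [∀ k l, AddCommGroup (V k l)] [∀ k l, Module ℂ (V k l)]

theorem inclHom_comp_inclHom (k l m n p q : I) (T : V m n →ₗ[ℂ] V k l)
    (U : V p q →ₗ[ℂ] V m n) :
    inclHom V k l m n T ∘ₗ inclHom V m n p q U = inclHom V k l p q (T ∘ₗ U) := by
  ext x
  simp [inclHom]

theorem inclHom_comp_inclHom_of_ne {m n m' n' : I} (h : (m, n) ≠ (m', n')) (k l p q : I)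
    (T : V m n →ₗ[ℂ] V k l) (U : V p q →ₗ[ℂ] V m' n') :
    inclHom V k l m n T ∘ₗ inclHom V m' n' p q U = 0 := by
  ext x
  simp [inclHom, DFinsupp.single_eq_of_ne h]

end InclHom

namespace PartialBialgebra.Corep

open LinearMap Function

variable {I C : Type} [NonUnitalRing C] [Module ℂ C] [SMulCommClass ℂ C C] [IsScalarTower ℂ C C]
  {B : PartialBialgebra I C} {S : C →ₗ[ℂ] C}
  {V : I → I → Type} [∀ k l, AddCommGroup (V k l)] [∀ k l, Module ℂ (V k l)] (𝒳 : Corep B V)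

theorem inv_mem_range (hS : B.IsAntipode S) (k l m n : I) :
    𝒳.inv S k l m n ∈ range (rTensor (V l k →ₗ[ℂ] V n m) (B.comp k l m n).subtype) := by
  obtain ⟨u, hu⟩ := 𝒳.X_mem n m l k
  refine ⟨rTensor _ (S.restrict (hS.1 n m l k)) u, ?_⟩
  rw [inv, ← hu, ← rTensor_comp_apply, ← rTensor_comp_apply]
  rfl

theorem inclHom_counit (k l m n : I) :
    inclHom V k l m n (TensorProduct.lid ℂ _ (rTensor _ B.ε (𝒳.X k l m n)))
      = if (k, l) = (m, n) then inclHom V k l k l LinearMap.id else 0 := by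
  split_ifs with h
  · obtain ⟨rfl, rfl⟩ := Prod.ext_iff.mp h
    rw [𝒳.counit_diag]
  · rw [𝒳.counit_ne k l m n h, map_zero]

theorem homProd_rTensor_X (f g : C →ₗ[ℂ] C) (k l m n p q : I) :
    homProd (rTensor _ f (𝒳.X k l m n)) (rTensor _ g (𝒳.X m n p q))
      = rTensor _ ((mul' ℂ C ∘ₗ TensorProduct.map f g) ∘ₗ B.Δ m n) (𝒳.X k l p q) := by
  rw [rTensor_comp_apply, 𝒳.comul, rTensor_mul'_map_corepProd]

theorem homProd_X_inv (k l m n k' : I) :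
    homProd (𝒳.X k l m n) (𝒳.inv S l k' n m)
      = rTensor _ ((mul' ℂ C ∘ₗ lTensor C S) ∘ₗ B.Δ m n) (𝒳.X k l k' l) := by
  have h := 𝒳.homProd_rTensor_X LinearMap.id S k l m n k' l
  rwa [rTensor_id, id_apply] at h

theorem homProd_inv_X (k l m n l' : I) :
    homProd (𝒳.inv S n m l k) (𝒳.X m n k l')
      = rTensor _ ((mul' ℂ C ∘ₗ rTensor C S) ∘ₗ B.Δ m n) (𝒳.X k l k l') := by
  have h := 𝒳.homProd_rTensor_X S LinearMap.id k l m n k l'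
  rwa [rTensor_id, id_apply] at h

theorem hasFiniteSupport_homProd_X_inv (k l m k' : I) :
    HasFiniteSupport fun n => homProd (𝒳.X k l m n) (𝒳.inv S l k' n m) := by
  simp only [homProd_X_inv]
  exact hasFiniteSupport_rTensor
    (fun a => B.hasFiniteSupport_Δ_row (mul' ℂ C ∘ₗ lTensor C S) a m) _

theorem hasFiniteSupport_homProd_inv_X (k l n l' : I) :
    HasFiniteSupport fun m => homProd (𝒳.inv S n m l k) (𝒳.X m n k l') := by
  simp only [homProd_inv_X]
  exact hasFiniteSupport_rTensor
    (fun a => B.hasFiniteSupport_Δ_col (mul' ℂ C ∘ₗ rTensor C S) a n) _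

theorem finsum_homProd_X_inv (hS : B.IsAntipode S) (k l m k' : I) :
    ∑ᶠ n, homProd (𝒳.X k l m n) (𝒳.inv S l k' n m)
      = B.E k m ⊗ₜ[ℂ] TensorProduct.lid ℂ _ (rTensor _ B.ε (𝒳.X k l k' l)) := by
  obtain ⟨u, hu⟩ := 𝒳.X_mem k l k' l
  simp only [homProd_X_inv, ← rTensor_toSpanSingleton_comp, ← hu, ← rTensor_comp_apply]
  apply finsum_rTensor
  · exact fun a => B.hasFiniteSupport_Δ_row (mul' ℂ C ∘ₗ lTensor C S) a m
  · exact fun a => hS.finsum_mul'_lTensor_Δ a.2 m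

theorem finsum_homProd_inv_X (hS : B.IsAntipode S) (k l n l' : I) :
    ∑ᶠ m, homProd (𝒳.inv S n m l k) (𝒳.X m n k l')
      = B.E n l' ⊗ₜ[ℂ] TensorProduct.lid ℂ _ (rTensor _ B.ε (𝒳.X k l k l')) := by
  obtain ⟨u, hu⟩ := 𝒳.X_mem k l k l'
  simp only [homProd_inv_X, ← rTensor_toSpanSingleton_comp, ← hu, ← rTensor_comp_apply]
  apply finsum_rTensor
  · exact fun a => B.hasFiniteSupport_Δ_col (mul' ℂ C ∘ₗ rTensor C S) a n
  · exact fun a => hS.finsum_mul'_rTensor_Δ a.2 n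

theorem homProd_XT_ZT (k l m n k' : I) :
    homProd (𝒳.XT k l m n) (𝒳.ZT S l k' n m)
      = lTensor C (inclHom V k l k' l) (homProd (𝒳.X k l m n) (𝒳.inv S l k' n m)) :=
  homProd_lTensor_lTensor _ _ _ (inclHom_comp_inclHom k l m n k' l) _ _

theorem homProd_XT_ZT_of_ne {m m' : I} (h : m' ≠ m) (k l n k' : I) :
    homProd (𝒳.XT k l m n) (𝒳.ZT S l k' n m') = 0 :=
  homProd_lTensor_lTensor_eq_zero _ _
    (fun _ _ => inclHom_comp_inclHom_of_ne (by simpa using h.symm) k l k' l _ _) _ _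

theorem homProd_ZT_XT (n m l k l' : I) :
    homProd (𝒳.ZT S n m l k) (𝒳.XT m n k l')
      = lTensor C (inclHom V k l k l') (homProd (𝒳.inv S n m l k) (𝒳.X m n k l')) :=
  homProd_lTensor_lTensor _ _ _ (inclHom_comp_inclHom k l m n k l') _ _

theorem homProd_ZT_XT_of_ne {n n' : I} (h : n ≠ n') (m l k l' : I) :
    homProd (𝒳.ZT S n m l k) (𝒳.XT m n' k l') = 0 :=
  homProd_lTensor_lTensor_eq_zero _ _
    (fun _ _ => inclHom_comp_inclHom_of_ne (by simpa using h) k l k l' _ _) _ _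

theorem hasFiniteSupport_homProd_XT_ZT (k l m k' : I) :
    HasFiniteSupport fun n => homProd (𝒳.XT k l m n) (𝒳.ZT S l k' n m) := by
  simp only [homProd_XT_ZT]
  exact (𝒳.hasFiniteSupport_homProd_X_inv k l m k').fun_comp (map_zero _)

theorem finsum_homProd_XT_ZT (hS : B.IsAntipode S) (k l m k' : I) :
    ∑ᶠ n, homProd (𝒳.XT k l m n) (𝒳.ZT S l k' n m)
      = if k = k' then B.E k m ⊗ₜ[ℂ] inclHom V k l k l LinearMap.id else 0 := by
  simp only [homProd_XT_ZT]
  rw [← LinearMap.map_finsum _ (𝒳.hasFiniteSupport_homProd_X_inv k l m k'),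
    𝒳.finsum_homProd_X_inv hS, lTensor_tmul, inclHom_counit]
  by_cases h : k = k' <;> simp [h]

theorem finsum_homProd_ZT_XT (hS : B.IsAntipode S) (n l k l' : I) :
    ∑ᶠ m, homProd (𝒳.ZT S n m l k) (𝒳.XT m n k l')
      = if l = l' then B.E n l ⊗ₜ[ℂ] inclHom V k l k l LinearMap.id else 0 := by
  simp only [homProd_ZT_XT]
  rw [← LinearMap.map_finsum _ (𝒳.hasFiniteSupport_homProd_inv_X k l n l'),
    𝒳.finsum_homProd_inv_X hS, lTensor_tmul, inclHom_counit]
  by_cases h : l = l'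
  · subst h; simp
  · simp [h]

theorem homProd_E_tmul_XT (k l m n p : I) :
    homProd (B.E k p ⊗ₜ[ℂ] inclHom V k l k l LinearMap.id) (𝒳.XT k l m n)
      = if p = m then 𝒳.XT k l m n else 0 := by
  change homProd (lTensor C (inclHom V k l k l) (B.E k p ⊗ₜ[ℂ] LinearMap.id)) _ = _
  rw [XT, homProd_lTensor_lTensor _ _ _ (inclHom_comp_inclHom k l k l m n), homProd_tmul_id_left,
    rTensor_mulLeft_E_of_mem_range (𝒳.X_mem k l m n)]
  by_cases h : p = m <;> simp [h]

theorem homProd_ZT_E_tmul (hS : B.IsAntipode S) (n m l k : I) :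
    homProd (𝒳.ZT S n m l k) (B.E m k ⊗ₜ[ℂ] inclHom V m n m n LinearMap.id) = 𝒳.ZT S n m l k := by
  change homProd _ (lTensor C (inclHom V m n m n) (B.E m k ⊗ₜ[ℂ] LinearMap.id)) = _
  rw [ZT, homProd_lTensor_lTensor _ _ _ (inclHom_comp_inclHom k l m n m n), homProd_tmul_id_right,
    rTensor_mulRight_E_of_mem_range (𝒳.inv_mem_range hS n m l k), if_pos rfl]

theorem finsum_homProd_XT_ZT_XT (hS : B.IsAntipode S) (k l k' m n : I) :
    ∑ᶠ p, ∑ᶠ q, homProd (homProd (𝒳.XT k l p q) (𝒳.ZT S l k' q p)) (𝒳.XT k' l m n)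
      = if k = k' then 𝒳.XT k l m n else 0 := by
  have hXZ : ∀ p, ∑ᶠ q, homProd (homProd (𝒳.XT k l p q) (𝒳.ZT S l k' q p)) (𝒳.XT k' l m n)
      = homProd (if k = k' then B.E k p ⊗ₜ[ℂ] inclHom V k l k l LinearMap.id else 0)
          (𝒳.XT k' l m n) := fun p => by
    rw [← homProd_finsum_left (𝒳.hasFiniteSupport_homProd_XT_ZT k l p k'),
      𝒳.finsum_homProd_XT_ZT hS]
  rw [finsum_congr hXZ]
  split_ifs with h
  · subst h
    rw [finsum_eq_single _ m fun p hp => by rw [𝒳.homProd_E_tmul_XT, if_neg hp],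
      𝒳.homProd_E_tmul_XT, if_pos rfl]
  · simp only [homProd_zero_left, finsum_zero]

theorem finsum_homProd_ZT_XT_ZT (hS : B.IsAntipode S) (n m₀ l k₀ : I) :
    ∑ᶠ m, ∑ᶠ d, homProd (homProd (𝒳.ZT S n m l k₀) (𝒳.XT m n k₀ d)) (𝒳.ZT S n m₀ d k₀)
      = 𝒳.ZT S n m₀ l k₀ := by
  have hXZ : ∀ m, ∑ᶠ d, homProd (homProd (𝒳.ZT S n m l k₀) (𝒳.XT m n k₀ d)) (𝒳.ZT S n m₀ d k₀)
      = homProd (𝒳.ZT S n m l k₀)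
          (if m = m₀ then B.E m k₀ ⊗ₜ[ℂ] inclHom V m n m n LinearMap.id else 0) := fun m => by
    simp only [homProd_assoc]
    rw [← homProd_finsum_right _ (𝒳.hasFiniteSupport_homProd_XT_ZT m n k₀ m₀),
      𝒳.finsum_homProd_XT_ZT hS]
  rw [finsum_congr hXZ, finsum_eq_single _ m₀ fun m hm => by rw [if_neg hm, homProd_zero_right],
    if_pos rfl, 𝒳.homProd_ZT_E_tmul hS]

end PartialBialgebra.Corep

open PartialBialgebra in
theorem generalized_inverse_of_corep_general
    {I C : Type} [NonUnitalRing C] [Module ℂ C] [SMulCommClass ℂ C C] [IsScalarTower ℂ C C]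
    (B : PartialBialgebra I C) (S : C →ₗ[ℂ] C) (hS : B.IsAntipode S)
    (V : I → I → Type)
    [∀ k l, AddCommGroup (V k l)] [∀ k l, Module ℂ (V k l)]
    (𝒳 : Corep B V) :
    (∀ k l m n, 𝒳.inv S k l m n ∈ LinearMap.range
      (LinearMap.rTensor (V l k →ₗ[ℂ] V n m) (B.comp k l m n).subtype)) ∧
    (∀ k l m n k' m', m' ≠ m →
      homProd (𝒳.XT k l m n) (𝒳.ZT S l k' n m') = 0) ∧
    (∀ k l m k', (∑ᶠ n, homProd (𝒳.XT k l m n) (𝒳.ZT S l k' n m))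
      = if k = k' then (B.E k m) ⊗ₜ[ℂ] (inclHom V k l k l LinearMap.id) else 0) ∧
    (∀ n m l k n' l', n ≠ n' →
      homProd (𝒳.ZT S n m l k) (𝒳.XT m n' k l') = 0) ∧
    (∀ n l k l', (∑ᶠ m, homProd (𝒳.ZT S n m l k) (𝒳.XT m n k l'))
      = if l = l' then (B.E n l) ⊗ₜ[ℂ] (inclHom V k l k l LinearMap.id) else 0) ∧
    (∀ k l k' m n, (∑ᶠ p, ∑ᶠ q,
        homProd (homProd (𝒳.XT k l p q) (𝒳.ZT S l k' q p)) (𝒳.XT k' l m n))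
      = if k = k' then 𝒳.XT k l m n else 0) ∧
    (∀ n m₀ l k₀, (∑ᶠ m, ∑ᶠ d,
        homProd (homProd (𝒳.ZT S n m l k₀) (𝒳.XT m n k₀ d)) (𝒳.ZT S n m₀ d k₀))
      = 𝒳.ZT S n m₀ l k₀) :=
  ⟨𝒳.inv_mem_range hS,
    fun k l _ n k' _ h => 𝒳.homProd_XT_ZT_of_ne h k l n k',
    𝒳.finsum_homProd_XT_ZT hS,
    fun _ m l k _ l' h => 𝒳.homProd_ZT_XT_of_ne h m l k l',
    𝒳.finsum_homProd_ZT_XT hS,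
    𝒳.finsum_homProd_XT_ZT_XT hS,
    𝒳.finsum_homProd_ZT_XT_ZT hS⟩

open PartialBialgebra in
/-- **generalized inverse.** Let `(V,𝒳)` be a corepresentation of a
partial Hopf algebra `𝒜` with antipode `S`, and set `Z(k,l;m,n) := (S⊗id)(X(n,m;l,k))`.
Then `Z(k,l;m,n) ∈ A(k,l;m,n) ⊗ Hom(V(l,k),V(n,m))`, and (computing inside
`A ⊗ End(⊕V)`): `X(k,l;m,n)Z(l,k';n,m') = 0` for `m' ≠ m`;
`Σ_n X(k,l;m,n)Z(l,k';n,m) = δ_{k,k'} 1(k,m) ⊗ id_{V(k,l)}`;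
`Z(n,m;l,k)X(m,n';k,l') = 0` for `n ≠ n'`;
`Σ_m Z(n,m;l,k)X(m,n;k,l') = δ_{l,l'} 1(n,l) ⊗ id_{V(k,l)}`.
In particular `Z` is a generalized inverse of `X`: `XZX = X` and `ZXZ = Z`
(stated blockwise), the identities `XZ = Σ_k λ_k ⊗ λ^V_k` and `ZX = Σ_l ρ_l ⊗ ρ^V_l`
being the blockwise sum formulas above. -/
theorem generalized_inverse_of_corep
    {I C : Type} [NonUnitalRing C] [Module ℂ C] [SMulCommClass ℂ C C] [IsScalarTower ℂ C C]
    (B : PartialBialgebra I C) (S : C →ₗ[ℂ] C) (hS : B.IsAntipode S)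
    (V : I → I → Type)
    [∀ k l, AddCommGroup (V k l)] [∀ k l, Module ℂ (V k l)]
    [∀ k l, FiniteDimensional ℂ (V k l)]
    (hV : Rcfd V) (𝒳 : Corep B V) :
    (∀ k l m n, 𝒳.inv S k l m n ∈ LinearMap.range
      (LinearMap.rTensor (V l k →ₗ[ℂ] V n m) (B.comp k l m n).subtype)) ∧
    (∀ k l m n k' m', m' ≠ m →
      homProd (𝒳.XT k l m n) (𝒳.ZT S l k' n m') = 0) ∧
    (∀ k l m k', (∑ᶠ n, homProd (𝒳.XT k l m n) (𝒳.ZT S l k' n m))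
      = if k = k' then (B.E k m) ⊗ₜ[ℂ] (inclHom V k l k l LinearMap.id) else 0) ∧
    (∀ n m l k n' l', n ≠ n' →
      homProd (𝒳.ZT S n m l k) (𝒳.XT m n' k l') = 0) ∧
    (∀ n l k l', (∑ᶠ m, homProd (𝒳.ZT S n m l k) (𝒳.XT m n k l'))
      = if l = l' then (B.E n l) ⊗ₜ[ℂ] (inclHom V k l k l LinearMap.id) else 0) ∧
    (∀ k l k' m n, (∑ᶠ p, ∑ᶠ q,
        homProd (homProd (𝒳.XT k l p q) (𝒳.ZT S l k' q p)) (𝒳.XT k' l m n))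
      = if k = k' then 𝒳.XT k l m n else 0) ∧
    (∀ n m₀ l k₀, (∑ᶠ m, ∑ᶠ d,
        homProd (homProd (𝒳.ZT S n m l k₀) (𝒳.XT m n k₀ d)) (𝒳.ZT S n m₀ d k₀))
      = 𝒳.ZT S n m₀ l k₀) :=
  generalized_inverse_of_corep_general B S hS V 𝒳
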